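/- arXiv:2202.00534 — 9 statements merged into one kernel-verified Lean document; each statement's English description precedes it below -/
import Mathlib

section
/- For all polynomial functors p₁, p₂, q₁, q₂ there exists a morphism of polynomial functors (p₁ ◁ p₂) ⊗ (q₁ ◁ q₂) → (p₁ ⊗ q₁) ◁ (p₂ ⊗ q₂) (the duoidal interchange map for ◁ and ⊗). -/
universe u

/-- A polynomial functor: a set of positions and, for each position, a set of directions. -/
structure PolyFunctor : Type (u+1) where
  Pos : Type u
  Dir : Pos → Type u

/-- A morphism of polynomial functors: forwards on positions, backwards on directions. -/
structure PolyHom (p q : PolyFunctor.{u}) : Type u where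
  onPos : p.Pos → q.Pos
  onDir : ∀ I : p.Pos, q.Dir (onPos I) → p.Dir I

/-- An isomorphism of polynomial functors: a bijection on positions and,
for each position, a bijection on directions. -/
structure PolyIso (p q : PolyFunctor.{u}) : Type u where
  pos : p.Pos ≃ q.Pos
  dir : ∀ I : p.Pos, p.Dir I ≃ q.Dir (pos I)

namespace PolyFunctor

/-- Coproduct `p + q`. -/
def add (p q : PolyFunctor.{u}) : PolyFunctor.{u} :=
  ⟨p.Pos ⊕ q.Pos, Sum.elim p.Dir q.Dir⟩

/-- Categorical product `p × q`. -/
def prod (p q : PolyFunctor.{u}) : PolyFunctor.{u} :=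
  ⟨p.Pos × q.Pos, fun x => p.Dir x.1 ⊕ q.Dir x.2⟩

/-- Dirichlet product `p ⊗ q`. -/
def tensor (p q : PolyFunctor.{u}) : PolyFunctor.{u} :=
  ⟨p.Pos × q.Pos, fun x => p.Dir x.1 × q.Dir x.2⟩

/-- Substitution (composition) product `p ◁ q`. -/
def subst (p q : PolyFunctor.{u}) : PolyFunctor.{u} :=
  ⟨Σ I : p.Pos, (p.Dir I → q.Pos), fun x => Σ i : p.Dir x.1, q.Dir (x.2 i)⟩

/-- The linear polynomial `A·y`. -/
def linear (A : Type u) : PolyFunctor.{u} :=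
  ⟨A, fun _ => PUnit⟩

/-- The representable polynomial `y^A`. -/
def rep (A : Type u) : PolyFunctor.{u} :=
  ⟨PUnit, fun _ => A⟩

/-- The constant polynomial `A`. -/
def const (A : Type u) : PolyFunctor.{u} :=
  ⟨A, fun _ => PEmpty⟩

/-- The identity polynomial `y`. -/
def y : PolyFunctor.{u} := linear PUnit

/-- Indexed product of a family of polynomials. -/
def pi (S : Type u) (r : S → PolyFunctor.{u}) : PolyFunctor.{u} :=
  ⟨∀ s : S, (r s).Pos, fun I => Σ s : S, (r s).Dir (I s)⟩

/-- Application of a polynomial functor to a set: `p(X) = Σ_{I ∈ p(1)} (p[I] → X)`. -/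
def obj (p : PolyFunctor.{u}) (X : Type u) : Type u :=
  Σ I : p.Pos, (p.Dir I → X)

end PolyFunctor

/-- The duoidal interchange map
`(p₁ ◁ p₂) ⊗ (q₁ ◁ q₂) → (p₁ ⊗ q₁) ◁ (p₂ ⊗ q₂)` exists. -/
theorem duoidal_interchange (p₁ p₂ q₁ q₂ : PolyFunctor.{u}) :
    Nonempty (PolyHom ((p₁.subst p₂).tensor (q₁.subst q₂))
      ((p₁.tensor q₁).subst (p₂.tensor q₂))) := by
  exact ⟨{ onPos := fun x => ⟨(x.1.1, x.2.1), fun d => (x.1.2 d.1, x.2.2 d.2)⟩,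
           onDir := fun x d => (⟨d.1.1, d.2.1⟩, ⟨d.1.2, d.2.2⟩) }⟩
end

section
/- For all polynomial functors p, p', q there is a bijection Poly(p' × p, q) ≅ Poly(p', q^p), where q^p := ∏_{I ∈ p(1)} q ◁ (p[I] + y); that is, q^p is the internal hom for the cartesian product on Poly. -/
universe u

/-- The cartesian closure: `q^p := ∏_{I ∈ p(1)} q ◁ (p[I] + y)`. -/
def cartClosure (p q : PolyFunctor.{u}) : PolyFunctor.{u} :=
  PolyFunctor.pi p.Pos (fun I => q.subst ((PolyFunctor.const (p.Dir I)).add PolyFunctor.y))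


namespace CartAux

universe v

/-- Skolem: a family of sigmas is a sigma of families. -/
def skolem {ι : Type v} {B : ι → Type v} {C : ∀ i, B i → Type v} :
    (∀ i, Σ b : B i, C i b) ≃ Σ f : ∀ i, B i, ∀ i, C i (f i) where
  toFun F := ⟨fun i => (F i).1, fun i => (F i).2⟩
  invFun x i := ⟨x.1 i, x.2 i⟩
  left_inv F := rfl
  right_inv x := rfl

/-- A `PolyHom` is a family of "containers of directions". -/
def homEquiv (p q : PolyFunctor.{u}) :
    PolyHom p q ≃ ∀ I : p.Pos, Σ K : q.Pos, (q.Dir K → p.Dir I) where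
  toFun φ I := ⟨φ.onPos I, φ.onDir I⟩
  invFun F := ⟨fun I => (F I).1, fun I => (F I).2⟩
  left_inv φ := rfl
  right_inv F := rfl

/-- Sigma associativity. -/
def sigmaAssoc {A : Type v} {B : A → Type v} (C : ∀ a, B a → Type v) :
    (Σ x : Σ a, B a, C x.1 x.2) ≃ Σ a, Σ b : B a, C a b where
  toFun x := ⟨x.1.1, x.1.2, x.2⟩
  invFun x := ⟨⟨x.1, x.2.1⟩, x.2.2⟩
  left_inv x := rfl
  right_inv x := rfl

/-- Currying over a product of types. -/
def prodPiEquiv {A B : Type v} (C : A × B → Type v) :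
    (∀ x : A × B, C x) ≃ ∀ a, ∀ b, C (a, b) where
  toFun F a b := F (a, b)
  invFun F x := F x.1 x.2
  left_inv F := rfl
  right_inv F := rfl

/-- Uncurrying a sigma domain. -/
def sigmaArrowEquiv {A : Type v} {B : A → Type v} {C : Type v} :
    (∀ a, (B a → C)) ≃ ((Σ a, B a) → C) where
  toFun F x := F x.1 x.2
  invFun F a b := F ⟨a, b⟩
  left_inv F := rfl
  right_inv F := rfl

/-- The core equivalence: `A ⊕ B ≃ Σ s : B ⊕ PUnit, (directions of s → A)`. -/
def core (A B : Type u) :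
    (A ⊕ B) ≃ Σ s : B ⊕ PUnit, (Sum.elim (fun _ => PEmpty.{u+1}) (fun _ => PUnit.{u+1}) s → A) where
  toFun
    | Sum.inl a => ⟨Sum.inr PUnit.unit, fun _ => a⟩
    | Sum.inr b => ⟨Sum.inl b, fun e => e.elim⟩
  invFun x :=
    match x with
    | ⟨Sum.inl b, _⟩ => Sum.inr b
    | ⟨Sum.inr _, h⟩ => Sum.inl (h PUnit.unit)
  left_inv x := by cases x <;> rfl
  right_inv x := by
    obtain ⟨s, h⟩ := x
    cases s with
    | inl b => exact congrArg (Sigma.mk _) (funext fun e => e.elim)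
    | inr u => rfl

end CartAux

/-- `q^p` is the internal hom for the cartesian product:
`PolyFunctor(p' × p, q) ≅ PolyFunctor(p', q^p)`. -/
theorem cartesian_closed (p p' q : PolyFunctor.{u}) :
    Nonempty (PolyHom (p'.prod p) q ≃ PolyHom p' (cartClosure p q)) := by
  refine ⟨((CartAux.homEquiv _ _).trans
    ((CartAux.prodPiEquiv _).trans
      (Equiv.piCongrRight fun J =>
        ((Equiv.piCongrRight fun I =>
            (Equiv.sigmaCongrRight fun K =>
              ((Equiv.arrowCongr (Equiv.refl _) (CartAux.core _ _)).trans
                ((CartAux.skolem).trans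
                  (Equiv.sigmaCongrRight fun f => CartAux.sigmaArrowEquiv))) :
              (Σ K : q.Pos, (q.Dir K → (p'.Dir J ⊕ p.Dir I))) ≃ _).trans
            (CartAux.sigmaAssoc _).symm).trans
          ((CartAux.skolem).trans
            (Equiv.sigmaCongrRight fun F =>
              (CartAux.sigmaArrowEquiv :
                (∀ I, ((Σ k, _) → p'.Dir J)) ≃ _))))))).trans
    (CartAux.homEquiv p' (cartClosure p q)).symm⟩
end

section
/- For all polynomial functors p, p', q there is a bijection Poly(p' ⊗ p, q) ≅ Poly(p', [p, q]), where [p, q] := ∏_{I ∈ p(1)} q ◁ (p[I] × y); that is, [p,q] is the internal hom (Dirichlet closure) for the Dirichlet product ⊗ on Poly. -/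
universe u

/-- The Dirichlet closure: `[p, q] := ∏_{I ∈ p(1)} q ◁ (p[I] × y)`. -/
def dirClosure (p q : PolyFunctor.{u}) : PolyFunctor.{u} :=
  PolyFunctor.pi p.Pos (fun I => q.subst (PolyFunctor.linear (p.Dir I)))

/-- `[p, q]` is the internal hom for the Dirichlet product:
`PolyFunctor(p' ⊗ p, q) ≅ PolyFunctor(p', [p, q])`. -/
theorem dirichlet_closed (p p' q : PolyFunctor.{u}) :
    Nonempty (PolyHom (p'.tensor p) q ≃ PolyHom p' (dirClosure p q)) := by
  refine ⟨{
    toFun := fun φ =>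
      ⟨fun I' I => ⟨φ.onPos (I', I), fun d => (φ.onDir (I', I) d).2⟩,
       fun I' x => (φ.onDir (I', x.1) x.2.1).1⟩
    invFun := fun ψ =>
      ⟨fun x => ((ψ.onPos x.1 x.2).1),
       fun x d => (ψ.onDir x.1 ⟨x.2, d, PUnit.unit⟩, (ψ.onPos x.1 x.2).2 d)⟩
    left_inv := fun φ => by
      cases φ with
      | mk f g => simp only [PolyHom.mk.injEq]; rfl
    right_inv := fun ψ => by
      cases ψ with
      | mk f g => simp only [PolyHom.mk.injEq]; rfl }⟩
end

section
/- For all polynomial functors p and q, the Dirichlet closure ∏_{I ∈ p(1)} q ◁ (p[I] × y) is isomorphic as a polynomial functor to Σ_{φ ∈ Poly(p,q)} y^{Σ_{I ∈ p(1)} q[φ₁ I]}; that is, [p,q] has one position for each morphism φ : p → q, with direction set Σ_{I ∈ p(1)} q[φ₁ I] at the position φ. -/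
universe u

/-- The standard form of the Dirichlet closure:
`[p,q] ≅ Σ_{φ ∈ PolyFunctor(p,q)} y^{Σ_{I ∈ p(1)} q[φ₁ I]}`. -/
theorem dirClosure_standard_form (p q : PolyFunctor.{u}) :
    Nonempty (PolyIso (dirClosure p q)
      ⟨PolyHom p q, fun φ => Σ I : p.Pos, q.Dir (φ.onPos I)⟩) := by
  refine ⟨⟨Equiv.mk (fun F => ⟨fun I => (F I).1, fun I => (F I).2⟩)
      (fun φ => fun I => ⟨φ.onPos I, φ.onDir I⟩) (fun F => rfl) (fun φ => rfl),
    fun F => Equiv.mk (fun d => ⟨d.1, d.2.1⟩) (fun d => ⟨d.1, d.2, PUnit.unit⟩)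
      (fun d => rfl) (fun d => rfl)⟩⟩
end

section
/- For all polynomial functors p, p', q there is a bijection Poly(⌈p/p'⌉, q) ≅ Poly(p, q ◁ p'), where ⌈p/p'⌉ := Σ_{I ∈ p(1)} y^{p'(p[I])} is the polynomial with positions p(1) and, at position I, direction set p'(p[I]) = Σ_{I' ∈ p'(1)} (p'[I'] → p[I]); that is, ⌈p/p'⌉ is a right coclosure for the substitution product (equivalently, the left Kan extension of p along p' is again polynomial and is given by this formula). -/
universe u

/-- The right coclosure for substitution: `⌈p/p'⌉ := Σ_{I ∈ p(1)} y^{p'(p[I])}`. -/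
def cocr (p p' : PolyFunctor.{u}) : PolyFunctor.{u} :=
  ⟨p.Pos, fun I => p'.obj (p.Dir I)⟩

/-- `⌈p/p'⌉` is a right coclosure for the substitution product:
`PolyFunctor(⌈p/p'⌉, q) ≅ PolyFunctor(p, q ◁ p')`. -/
theorem cocr_adjunction (p p' q : PolyFunctor.{u}) :
    Nonempty (PolyHom (cocr p p') q ≃ PolyHom p (q.subst p')) := by
  exact ⟨{
    toFun := fun f =>
      { onPos := fun I => ⟨f.onPos I, fun j => (f.onDir I j).1⟩
        onDir := fun I jd => (f.onDir I jd.1).2 jd.2 }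
    invFun := fun g =>
      { onPos := fun I => (g.onPos I).1
        onDir := fun I j => ⟨(g.onPos I).2 j, fun d => g.onDir I ⟨j, d⟩⟩ }
    left_inv := fun f => rfl
    right_inv := fun g => rfl }⟩
end

section
/- For all polynomial functors p, q, r there is a bijection Poly(p, q ◁ r) ≅ Σ_{f : p(1) → q(1)} Poly(p ⌊_f q, r), where for a function f : p(1) → q(1) the indexed left coclosure p ⌊_f q := Σ_{I ∈ p(1)} q[f I] · y^{p[I]} is the polynomial with positions Σ_{I ∈ p(1)} q[f I] and direction set p[I] at any position lying over I. -/
universe u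

/-- The indexed left coclosure for substitution:
for `f : p(1) → q(1)`, `p ⌊_f q := Σ_{I ∈ p(1)} q[f I]·y^{p[I]}`. -/
def cocl (p q : PolyFunctor.{u}) (f : p.Pos → q.Pos) : PolyFunctor.{u} :=
  ⟨Σ I : p.Pos, q.Dir (f I), fun x => p.Dir x.1⟩

/-- The indexed-adjunction formula for the indexed left `◁`-coclosure:
`PolyFunctor(p, q ◁ r) ≅ Σ_{f : p(1) → q(1)} PolyFunctor(p ⌊_f q, r)`. -/
theorem cocl_indexed_adjunction (p q r : PolyFunctor.{u}) :
    Nonempty (PolyHom p (q.subst r) ≃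
      Σ f : p.Pos → q.Pos, PolyHom (cocl p q f) r) := by
  refine ⟨{
    toFun := fun φ =>
      ⟨fun I => (φ.onPos I).1,
       { onPos := fun x => (φ.onPos x.1).2 x.2
         onDir := fun x d => φ.onDir x.1 ⟨x.2, d⟩ }⟩
    invFun := fun ⟨f, ψ⟩ =>
      { onPos := fun I => ⟨f I, fun j => ψ.onPos ⟨I, j⟩⟩
        onDir := fun I d => ψ.onDir ⟨I, d.1⟩ d.2 }
    left_inv := fun φ => rfl
    right_inv := fun ⟨f, ψ⟩ => rfl }⟩
end

section
/- For all polynomial functors p, q, r there is a bijection Poly(p, q ⊗ r) ≅ Σ_{f : p(1) → q(1)} Poly(p ⫤_f q, r), where for a function f : p(1) → q(1) the indexed ⊗-coclosure p ⫤_f q := Σ_{I ∈ p(1)} y^{(p[I]^{q[f I]})} is the polynomial with positions p(1) and direction set (q[f I] → p[I]) at position I. -/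
universe u

/-- The indexed coclosure for the Dirichlet product:
for `f : p(1) → q(1)`, `p ⫤_f q := Σ_{I ∈ p(1)} y^(p[I]^(q[f I]))`. -/
def hyper (p q : PolyFunctor.{u}) (f : p.Pos → q.Pos) : PolyFunctor.{u} :=
  ⟨p.Pos, fun I => q.Dir (f I) → p.Dir I⟩

/-- The indexed-adjunction formula for the indexed `⊗`-coclosure:
`PolyFunctor(p, q ⊗ r) ≅ Σ_{f : p(1) → q(1)} PolyFunctor(p ⫤_f q, r)`. -/
theorem hyper_indexed_adjunction (p q r : PolyFunctor.{u}) :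
    Nonempty (PolyHom p (q.tensor r) ≃
      Σ f : p.Pos → q.Pos, PolyHom (hyper p q f) r) := by
  exact ⟨{
    toFun := fun φ => ⟨fun I => (φ.onPos I).1,
      { onPos := fun I => (φ.onPos I).2,
        onDir := fun I d c => φ.onDir I (c, d) }⟩
    invFun := fun ⟨f, ψ⟩ =>
      { onPos := fun I => (f I, ψ.onPos I),
        onDir := fun I x => ψ.onDir I x.2 x.1 }
    left_inv := fun φ => rfl
    right_inv := fun ⟨f, ψ⟩ => rfl }⟩
end

section
/- For all polynomial functors p and q there is an isomorphism of polynomial functors (p + y) ⊗ (q + y) ≅ (p ∨ q) + y, where p ∨ q := p + (p ⊗ q) + q; that is, the functor p ↦ p + y is strong monoidal from the (0, ∨) monoidal structure to the (y, ⊗) monoidal structure on Poly. -/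
universe u

/-- `p ∨ q := p + (p ⊗ q) + q`. -/
def vee (p q : PolyFunctor.{u}) : PolyFunctor.{u} :=
  p.add ((p.tensor q).add q)

def addYIso (p q : PolyFunctor.{u}) :
    PolyIso ((p.add PolyFunctor.y).tensor (q.add PolyFunctor.y)) ((vee p q).add PolyFunctor.y) where
  pos :=
    { toFun := fun x =>
        match x with
        | (Sum.inl I, Sum.inl J) => Sum.inl (Sum.inr (Sum.inl (I, J)))
        | (Sum.inl I, Sum.inr _) => Sum.inl (Sum.inl I)
        | (Sum.inr _, Sum.inl J) => Sum.inl (Sum.inr (Sum.inr J))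
        | (Sum.inr _, Sum.inr _) => Sum.inr PUnit.unit
      invFun := fun x =>
        match x with
        | Sum.inl (Sum.inr (Sum.inl (I, J))) => (Sum.inl I, Sum.inl J)
        | Sum.inl (Sum.inl I) => (Sum.inl I, Sum.inr PUnit.unit)
        | Sum.inl (Sum.inr (Sum.inr J)) => (Sum.inr PUnit.unit, Sum.inl J)
        | Sum.inr _ => (Sum.inr PUnit.unit, Sum.inr PUnit.unit)
      left_inv := by rintro ⟨I | u, J | v⟩ <;> rfl
      right_inv := by rintro ((I | ⟨I, J⟩ | J) | u) <;> rfl }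
  dir := by
    rintro ⟨I | u, J | v⟩
    · exact Equiv.refl _
    · exact Equiv.prodPUnit _
    · exact Equiv.punitProd _
    · exact Equiv.prodPUnit _

/-- `(p + y) ⊗ (q + y) ≅ (p ∨ q) + y`: the functor `p ↦ p + y` is strong monoidal
from `(0, ∨)` to `(y, ⊗)`. -/
theorem addY_strong_monoidal (p q : PolyFunctor.{u}) :
    Nonempty (PolyIso ((p.add PolyFunctor.y).tensor (q.add PolyFunctor.y)) ((vee p q).add PolyFunctor.y)) := by
  exact ⟨addYIso p q⟩
end

section
/- For all polynomial functors p and q there are bijections (p ⊗ q)(1) ≅ p(1) × q(1) and Γ(p ⊗ q) ≅ Γ(p)^{q(1)} × Γ(q)^{p(1)}; that is, the functor p ↦ (p(1), Γ(p)) from Poly to Set × Set^op is strong monoidal for the Dirichlet product ⊗ on Poly and the monoidal product (A₁,B₁) ⊗ (A₂,B₂) := (A₁ × A₂, B₁^{A₂} × B₂^{A₁}) on Set × Set^op. -/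
universe u

/-- Global sections: `Γ(p) := ∏_{I ∈ p(1)} p[I]`. -/
def gamma (p : PolyFunctor.{u}) : Type u := ∀ I : p.Pos, p.Dir I

/-- The functor `p ↦ (p(1), Γ(p))` is strong monoidal for `⊗` on `PolyFunctor` and
`(A₁,B₁) ⊗ (A₂,B₂) := (A₁ × A₂, B₁^(A₂) × B₂^(A₁))` on `Set × Set^op`:
`(p ⊗ q)(1) ≅ p(1) × q(1)` and `Γ(p ⊗ q) ≅ Γ(p)^(q(1)) × Γ(q)^(p(1))`. -/
theorem posGamma_strong_monoidal (p q : PolyFunctor.{u}) :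
    Nonempty ((p.tensor q).Pos ≃ p.Pos × q.Pos) ∧
    Nonempty (gamma (p.tensor q) ≃ (q.Pos → gamma p) × (p.Pos → gamma q)) := by
  refine ⟨⟨Equiv.refl _⟩, ⟨⟨fun f => (fun J I => (f (I, J)).1, fun I J => (f (I, J)).2),
    fun g x => (g.1 x.2 x.1, g.2 x.1 x.2), fun f => rfl, fun g => rfl⟩⟩⟩
end
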